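/- For integers L ≥ 1 and 0 ≤ j ≤ L, the alternating sum ∑_{i=j}^{L} (-1)^{i-j} (C(2L, L+i) - C(2L, L+i+1)) equals C(2L-2, L-j) - C(2L-2, L-j-2), where C(n,k) denotes the binomial coefficient (with C(n,k) = 0 whenever k < 0 or k > n). -/

import Mathlib

/-!
Write `m = 2L - 2`. Applying Pascal's rule twice to each binomial coefficient of row `2L = m + 2`
splits the `i`-th summand as `h i + h (i + 1)` with `h i = C(m, L + i - 2) - C(m, L + i)`, so the
alternating sum telescopes to `h j` (the boundary term `h (L + 1)` vanishes, its indices exceeding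
`m`). By the symmetry `C(m, k) = C(m, m - k)`, `h j` is the right-hand side.
-/

/-- Binomial coefficient with integer lower index, zero outside range. -/
def C (n : ℕ) (k : ℤ) : ℤ := if 0 ≤ k then (n.choose k.toNat : ℤ) else 0

lemma C_of_neg {n : ℕ} {k : ℤ} (hk : k < 0) : C n k = 0 := if_neg (by omega)

lemma C_eq_zero_of_lt {n : ℕ} {k : ℤ} (hk : (n : ℤ) < k) : C n k = 0 := by
  rw [C, if_pos (by omega), Nat.choose_eq_zero_of_lt (by omega), Nat.cast_zero]

lemma C_succ (n : ℕ) (k : ℤ) : C (n + 1) k = C n k + C n (k - 1) := by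
  rcases lt_trichotomy k 0 with hk | rfl | hk
  · rw [C_of_neg hk, C_of_neg hk, C_of_neg (by omega), add_zero]
  · simp [C]
  · have hk' : k.toNat = (k - 1).toNat + 1 := by omega
    rw [C, C, C, if_pos hk.le, if_pos hk.le, if_pos (by omega), hk', Nat.choose_succ_succ,
      Nat.cast_add, add_comm]

lemma C_symm (n : ℕ) (k : ℤ) : C n k = C n (n - k) := by
  rcases lt_or_ge k 0 with hk | hk
  · rw [C_of_neg hk, C_eq_zero_of_lt (by omega)]
  rcases lt_or_ge (n : ℤ) k with hkn | hkn
  · rw [C_eq_zero_of_lt hkn, C_of_neg (by omega)]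
  · rw [C, C, if_pos hk, if_pos (by omega), ← Nat.choose_symm (by omega : k.toNat ≤ n)]
    congr 2
    omega

lemma C_add_two_sub_C_add_two (m : ℕ) (k : ℤ) :
    C (m + 2) k - C (m + 2) (k + 1) = (C m (k - 2) - C m k) + (C m (k + 1 - 2) - C m (k + 1)) := by
  simp only [C_succ, add_sub_cancel_right]
  ring_nf

lemma sum_Icc_neg_one_pow_mul_add_succ {R : Type*} [CommRing R] (h : ℕ → R) {j n : ℕ}
    (hjn : j ≤ n) :
    ∑ i ∈ Finset.Icc j n, (-1 : R) ^ (i - j) * (h i + h (i + 1))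
      = h j - (-1) ^ (n + 1 - j) * h (n + 1) := by
  induction n, hjn using Nat.le_induction with
  | base => simp
  | succ n hjn ih =>
    rw [Finset.sum_Icc_succ_top (by omega), ih, show n + 1 + 1 - j = n + 1 - j + 1 by omega,
      show n + 1 - j = n - j + 1 by omega]
    ring

theorem alternating_sum_binom (L j : ℕ) (hL : 1 ≤ L) (hj : j ≤ L) :
    ∑ i ∈ Finset.Icc j L,
        (-1 : ℤ) ^ (i - j) * (C (2*L) ((L : ℤ) + i) - C (2*L) ((L : ℤ) + i + 1))
      = C (2*L - 2) ((L : ℤ) - j) - C (2*L - 2) ((L : ℤ) - j - 2) := by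
  obtain ⟨m, hm⟩ : ∃ m, 2 * L = m + 2 := ⟨2 * L - 2, by omega⟩
  set h : ℕ → ℤ := fun i ↦ C m ((L : ℤ) + i - 2) - C m ((L : ℤ) + i)
  have hsplit (i : ℕ) : C (2*L) ((L : ℤ) + i) - C (2*L) ((L : ℤ) + i + 1) = h i + h (i + 1) := by
    rw [hm, C_add_two_sub_C_add_two]
    push_cast [h]
    ring_nf
  have hvanish : h (L + 1) = 0 := by
    simp only [h]
    rw [C_eq_zero_of_lt (by omega), C_eq_zero_of_lt (by omega), sub_zero]
  simp only [hsplit, sum_Icc_neg_one_pow_mul_add_succ h hj, hvanish, mul_zero, sub_zero]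
  rw [show 2 * L - 2 = m by omega, C_symm m ((L : ℤ) - j), C_symm m ((L : ℤ) - j - 2)]
  show C m ((L : ℤ) + j - 2) - C m ((L : ℤ) + j) = _
  congr 2 <;> omega
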